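/- arXiv:2401.10764 — 3 statements merged into one kernel-verified Lean document; each statement's English description precedes it below -/
import Mathlib

section
/- Suppose the equation x'(t) = L(t)x_t is shadowable. Then for every t ≥ 0 the phase space decomposes as a direct sum C = 𝒮(t) ⊕ 𝒰(t), where 𝒮(t) is the stable subspace at time t and 𝒰(t) = T(t,0)𝒰 with 𝒰 a fixed complement of 𝒮(0). -/
open Set

noncomputable section

/-- The Euclidean state space ℝ^d. -/
abbrev Rd (d : ℕ) : Type := EuclideanSpace ℝ (Fin d)

/-- The phase space C = C([-r,0], ℝ^d) with the supremum norm. -/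
abbrev Ph (d : ℕ) (r : ℝ) : Type := C(Set.Icc (-r) (0:ℝ), Rd d)

/-- The segment x_t ∈ C of a continuous function x : ℝ → ℝ^d, x_t(θ) = x(t+θ). -/
def seg (d : ℕ) (r : ℝ) (x : ℝ → Rd d) (hx : Continuous x) (t : ℝ) : Ph d r :=
  ⟨fun θ => x (t + θ.1), hx.comp (continuous_const.add continuous_subtype_val)⟩

/-- `x` is a solution of x'(t) = L(t)x_t on [s, ∞) (right-hand derivative at s). -/
def IsSol (d : ℕ) (r : ℝ) (L : ℝ → (Ph d r →L[ℝ] Rd d)) (s : ℝ)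
    (x : ℝ → Rd d) (hx : Continuous x) : Prop :=
  ∀ t, s ≤ t → HasDerivWithinAt x (L t (seg d r x hx t)) (Set.Ici s) t

/-- `T` is the solution operator family of x'(t) = L(t)x_t :
for every s ≥ 0 and φ ∈ C there is a solution x on [s,∞) with x_s = φ and x_t = T(t,s)φ. -/
def IsSolOp (d : ℕ) (r : ℝ) (L : ℝ → (Ph d r →L[ℝ] Rd d))
    (T : ℝ → ℝ → (Ph d r →L[ℝ] Ph d r)) : Prop :=
  ∀ s, 0 ≤ s → ∀ φ : Ph d r, ∃ (x : ℝ → Rd d) (hx : Continuous x),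
    IsSol d r L s x hx ∧ seg d r x hx s = φ ∧ ∀ t, s ≤ t → seg d r x hx t = T t s φ

/-- The evolution family property of the solution operators. -/
def Cocycle (d : ℕ) (r : ℝ) (T : ℝ → ℝ → (Ph d r →L[ℝ] Ph d r)) : Prop :=
  (∀ s, 0 ≤ s → T s s = ContinuousLinearMap.id ℝ (Ph d r)) ∧
  ∀ τ t s, 0 ≤ s → s ≤ t → t ≤ τ → T τ s = (T τ t).comp (T t s)

/-- Uniqueness of solutions with a given initial segment at time s. -/
def UniqueSol (d : ℕ) (r : ℝ) (L : ℝ → (Ph d r →L[ℝ] Rd d)) : Prop :=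
  ∀ s, 0 ≤ s → ∀ (x y : ℝ → Rd d) (hx : Continuous x) (hy : Continuous y),
    IsSol d r L s x hx → IsSol d r L s y hy → seg d r x hx s = seg d r y hy s →
    ∀ t, s - r ≤ t → x t = y t

/-- Eq. x'(t) = L(t)x_t is shadowable. -/
def Shadowable (d : ℕ) (r : ℝ) (L : ℝ → (Ph d r →L[ℝ] Rd d)) : Prop :=
  ∀ ε, 0 < ε → ∃ δ, 0 < δ ∧ ∀ (y yd : ℝ → Rd d) (hy : Continuous y),
    ContinuousOn yd (Set.Ici 0) →
    (∀ t, 0 ≤ t → HasDerivWithinAt y (yd t) (Set.Ici 0) t) →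
    (∀ t, 0 ≤ t → ‖yd t - L t (seg d r y hy t)‖ ≤ δ) →
    ∃ (x : ℝ → Rd d) (hx : Continuous x), IsSol d r L 0 x hx ∧
      ∀ t, 0 ≤ t → ‖seg d r x hx t - seg d r y hy t‖ ≤ ε

/-- Eq. x'(t) = L(t)x_t is Hyers–Ulam stable. -/
def HyersUlam (d : ℕ) (r : ℝ) (L : ℝ → (Ph d r →L[ℝ] Rd d)) : Prop :=
  ∃ κ, 0 < κ ∧ ∀ δ, 0 < δ → ∀ (y yd : ℝ → Rd d) (hy : Continuous y),
    ContinuousOn yd (Set.Ici 0) →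
    (∀ t, 0 ≤ t → HasDerivWithinAt y (yd t) (Set.Ici 0) t) →
    (∀ t, 0 ≤ t → ‖yd t - L t (seg d r y hy t)‖ ≤ δ) →
    ∃ (x : ℝ → Rd d) (hx : Continuous x), IsSol d r L 0 x hx ∧
      ∀ t, 0 ≤ t → ‖seg d r x hx t - seg d r y hy t‖ ≤ κ * δ

/-- The stable subspace 𝒮(s) = {φ ∈ C : sup_{t ≥ s} ‖T(t,s)φ‖ < ∞}. -/
def stableSub (d : ℕ) (r : ℝ) (T : ℝ → ℝ → (Ph d r →L[ℝ] Ph d r)) (s : ℝ) :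
    Submodule ℝ (Ph d r) where
  carrier := {φ | ∃ M, ∀ t, s ≤ t → ‖T t s φ‖ ≤ M}
  add_mem' := by
    rintro a b ⟨Ma, hMa⟩ ⟨Mb, hMb⟩
    refine ⟨Ma + Mb, fun t ht => ?_⟩
    calc ‖T t s (a + b)‖ = ‖T t s a + T t s b‖ := by rw [map_add]
    _ ≤ ‖T t s a‖ + ‖T t s b‖ := norm_add_le _ _
    _ ≤ Ma + Mb := add_le_add (hMa t ht) (hMb t ht)
  zero_mem' := ⟨0, fun t ht => by simp⟩
  smul_mem' := by
    rintro c a ⟨Ma, hMa⟩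
    refine ⟨‖c‖ * Ma, fun t ht => ?_⟩
    rw [map_smul]
    have h1 : ‖c • (T t s) a‖ = ‖c‖ * ‖(T t s) a‖ := @norm_smul ℝ (Ph d r) _ _ _ _ c _
    rw [h1]
    exact mul_le_mul_of_nonneg_left (hMa t ht) (norm_nonneg c)

/-- Eq. x'(t) = L(t)x_t admits an exponential dichotomy (with solution operators T). -/
def ExpDich (d : ℕ) (r : ℝ) (T : ℝ → ℝ → (Ph d r →L[ℝ] Ph d r)) : Prop :=
  ∃ (P : ℝ → (Ph d r →L[ℝ] Ph d r)) (D lam : ℝ), 0 < D ∧ 0 < lam ∧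
    (∀ t, 0 ≤ t → (P t).comp (P t) = P t) ∧
    (∀ t s, 0 ≤ s → s ≤ t → (P t).comp (T t s) = (T t s).comp (P s)) ∧
    (∀ t s, 0 ≤ s → s ≤ t →
      Set.BijOn (⇑(T t s)) (LinearMap.ker (P s : Ph d r →ₗ[ℝ] Ph d r) : Set (Ph d r))
        (LinearMap.ker (P t : Ph d r →ₗ[ℝ] Ph d r) : Set (Ph d r))) ∧
    (∀ t s, 0 ≤ s → s ≤ t → ‖(T t s).comp (P s)‖ ≤ D * Real.exp (-lam * (t - s))) ∧
    (∀ t s, 0 ≤ t → t ≤ s → ∀ φ ∈ LinearMap.ker (P t : Ph d r →ₗ[ℝ] Ph d r),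
      ‖φ‖ ≤ D * Real.exp (-lam * (s - t)) * ‖T s t φ‖)

/-!
If `T(t,0)u ∈ 𝒮(t)`, then `T(τ,0)u` is bounded for `τ ≥ t`, and for `τ ∈ [0,t]` by continuity of the
orbit; so `u ∈ 𝒮(0) ∩ 𝒰 = 0`. This gives disjointness.

For the sum, shadowability implies Hyers–Ulam stability, by linearity. Let `y` be a solution with
`y_t = φ`. Multiplying it by a smooth cutoff that vanishes before `t + 1` gives an approximate
solution on `[0,∞)` whose defect has compact support. So some true solution `z` on `[0,∞)` stays at
bounded distance from `y`, which means `φ - T(t,0)z₀ ∈ 𝒮(t)`. Split `z₀` along `𝒮(0) ⊕ 𝒰`; since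
`T(t,0)` maps `𝒮(0)` into `𝒮(t)`, this writes `φ` as an element of `𝒮(t)` plus one of `T(t,0)𝒰`.
-/

open Filter Topology

section Segments

variable {d : ℕ} {r : ℝ} {L : ℝ → (Ph d r →L[ℝ] Rd d)}

theorem continuous_seg {x : ℝ → Rd d} (hx : Continuous x) : Continuous (seg d r x hx) :=
  ContinuousMap.continuous_of_continuous_uncurry _ (hx.comp (by fun_prop))

theorem seg_smul (c : ℝ) {x : ℝ → Rd d} (hx : Continuous x)
    (hcx : Continuous fun τ => c • x τ) (τ : ℝ) :
    seg d r (fun τ => c • x τ) hcx τ = c • seg d r x hx τ :=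
  ContinuousMap.ext fun _ => rfl

theorem IsSol.const_smul {s : ℝ} {x : ℝ → Rd d} {hx : Continuous x}
    (hsol : IsSol d r L s x hx) (c : ℝ) (hcx : Continuous fun τ => c • x τ) :
    IsSol d r L s (fun τ => c • x τ) hcx := by
  intro τ hτ
  rw [seg_smul c hx hcx, map_smul]
  exact (hsol τ hτ).const_smul c

theorem IsSol.seg_eq_solOp {T : ℝ → ℝ → (Ph d r →L[ℝ] Ph d r)} (hT : IsSolOp d r L T)
    (huniq : UniqueSol d r L) {s : ℝ} (hs : 0 ≤ s) {x : ℝ → Rd d} {hx : Continuous x}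
    (hsol : IsSol d r L s x hx) (τ : ℝ) (hτ : s ≤ τ) :
    seg d r x hx τ = T τ s (seg d r x hx s) := by
  obtain ⟨y, hy, hysol, hyinit, hyT⟩ := hT s hs (seg d r x hx s)
  rw [← hyT τ hτ]
  exact ContinuousMap.ext fun θ =>
    huniq s hs x y hx hy hsol hysol hyinit.symm _ (by linarith [θ.2.1])

end Segments

theorem exists_norm_le_of_continuousOn_Ici_of_eq_zero {E : Type*} [NormedAddCommGroup E]
    {f : ℝ → E} {a b : ℝ} (hf : ContinuousOn f (Ici a)) (h0 : ∀ τ, b ≤ τ → f τ = 0) :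
    ∃ M, ∀ τ, a ≤ τ → ‖f τ‖ ≤ M := by
  obtain ⟨K, hK⟩ := (isCompact_Icc (a := a) (b := b)).exists_bound_of_continuousOn
    (hf.mono Icc_subset_Ici_self)
  refine ⟨max K 0, fun τ hτ => ?_⟩
  rcases le_total b τ with hbτ | hτb
  · simp [h0 τ hbτ]
  · exact (hK τ ⟨hτ, hτb⟩).trans (le_max_left _ _)

section Cutoff

def cutoff (a τ : ℝ) : ℝ := Real.smoothTransition (τ - a)

variable {a τ : ℝ}

theorem contDiff_cutoff (a : ℝ) : ContDiff ℝ 1 (cutoff a) :=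
  Real.smoothTransition.contDiff.comp (contDiff_id.sub contDiff_const)

theorem cutoff_of_le (h : τ ≤ a) : cutoff a τ = 0 :=
  Real.smoothTransition.zero_of_nonpos (by linarith)

theorem cutoff_of_ge (h : a + 1 ≤ τ) : cutoff a τ = 1 :=
  Real.smoothTransition.one_of_one_le (by linarith)

theorem deriv_cutoff_of_lt (h : τ < a) : deriv (cutoff a) τ = 0 := by
  have hzero : cutoff a =ᶠ[𝓝 τ] fun _ => 0 := by
    filter_upwards [Iio_mem_nhds h] with σ hσ using cutoff_of_le hσ.le
  rw [hzero.deriv_eq, deriv_const]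

theorem deriv_cutoff_of_gt (h : a + 1 < τ) : deriv (cutoff a) τ = 0 := by
  have hone : cutoff a =ᶠ[𝓝 τ] fun _ => 1 := by
    filter_upwards [Ioi_mem_nhds h] with σ hσ using cutoff_of_ge hσ.le
  rw [hone.deriv_eq, deriv_const]

end Cutoff

section PseudoSolutions

variable {d : ℕ} {r : ℝ} {L : ℝ → (Ph d r →L[ℝ] Rd d)}
  {s : ℝ} {y : ℝ → Rd d} {hy : Continuous y}

theorem IsSol.hasDerivAt_cutoff_smul (hsol : IsSol d r L s y hy) (τ : ℝ) :
    HasDerivAt (fun σ => cutoff (s + 1) σ • y σ)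
      (deriv (cutoff (s + 1)) τ • y τ + cutoff (s + 1) τ • L τ (seg d r y hy τ)) τ := by
  rcases lt_or_ge τ (s + 1) with hτ | hτ
  · have hzero : (fun σ => cutoff (s + 1) σ • y σ) =ᶠ[𝓝 τ] fun _ => 0 := by
      filter_upwards [Iio_mem_nhds hτ] with σ hσ
      rw [cutoff_of_le hσ.le, zero_smul]
    rw [deriv_cutoff_of_lt hτ, cutoff_of_le hτ.le, zero_smul, zero_smul, add_zero]
    exact (hasDerivAt_const τ 0).congr_of_eventuallyEq hzero
  · have hy' : HasDerivAt y (L τ (seg d r y hy τ)) τ :=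
      (hsol τ (by linarith)).hasDerivAt (Ici_mem_nhds (by linarith))
    have hχ := ((contDiff_cutoff (s + 1)).differentiable one_ne_zero τ).hasDerivAt
    exact (hχ.smul hy').congr_deriv (add_comm _ _)

theorem IsSol.exists_pseudoSol_eventuallyEq (hr : 0 ≤ r) (hL : ContinuousOn L (Ici 0))
    (hsol : IsSol d r L s y hy) :
    ∃ (w wd : ℝ → Rd d) (hw : Continuous w), ContinuousOn wd (Ici 0) ∧
      (∀ τ, HasDerivAt w (wd τ) τ) ∧
      ∃ b, ∀ τ, b ≤ τ → seg d r w hw τ = seg d r y hy τ ∧ wd τ = L τ (seg d r w hw τ) := by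
  have hχ := contDiff_cutoff (s + 1)
  have hw : Continuous fun σ => cutoff (s + 1) σ • y σ := hχ.continuous.smul hy
  have hseg : ∀ τ, s + 2 + r ≤ τ → seg d r _ hw τ = seg d r y hy τ := fun τ hτ =>
    ContinuousMap.ext fun θ => by
      change cutoff (s + 1) (τ + θ.1) • y (τ + θ.1) = y (τ + θ.1)
      rw [cutoff_of_ge (by linarith [θ.2.1]), one_smul]
  refine ⟨_, _, hw, ?_, hsol.hasDerivAt_cutoff_smul, s + 3 + r, fun τ hτ => ⟨hseg τ (by linarith), ?_⟩⟩
  · exact ((hχ.continuous_deriv le_rfl).smul hy).continuousOn.add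
      (hχ.continuous.continuousOn.smul (hL.clm_apply (continuous_seg hy).continuousOn))
  · rw [hseg τ (by linarith), deriv_cutoff_of_gt (by linarith), cutoff_of_ge (by linarith),
      zero_smul, one_smul, zero_add]

end PseudoSolutions

section HyersUlam

variable {d : ℕ} {r : ℝ} {L : ℝ → (Ph d r →L[ℝ] Rd d)}

theorem Shadowable.hyersUlam (hsh : Shadowable d r L) : HyersUlam d r L := by
  obtain ⟨δ₁, hδ₁, hsh₁⟩ := hsh 1 one_pos
  refine ⟨δ₁⁻¹, inv_pos.2 hδ₁, fun δ hδ y yd hy hyd hder hdef => ?_⟩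
  set c := δ₁ / δ
  have hc : 0 < c := div_pos hδ₁ hδ
  have hcy : Continuous fun τ => c • y τ := hy.const_smul c
  have hcdef : ∀ τ, 0 ≤ τ → ‖c • yd τ - L τ (seg d r _ hcy τ)‖ ≤ δ₁ := fun τ hτ => by
    rw [seg_smul c hy hcy, map_smul, ← smul_sub, norm_smul, Real.norm_of_nonneg hc.le]
    calc c * ‖yd τ - L τ (seg d r y hy τ)‖ ≤ c * δ := by gcongr; exact hdef τ hτ
      _ = δ₁ := div_mul_cancel₀ δ₁ hδ.ne'
  obtain ⟨x, hx, hxsol, hxnear⟩ := hsh₁ _ _ hcy (hyd.const_smul c)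
    (fun τ hτ => (hder τ hτ).const_smul c) hcdef
  have hcx : Continuous fun τ => c⁻¹ • x τ := hx.const_smul c⁻¹
  refine ⟨_, hcx, hxsol.const_smul c⁻¹ hcx, fun τ hτ => ?_⟩
  have hsub : seg d r _ hcx τ - seg d r y hy τ = c⁻¹ • (seg d r x hx τ - seg d r _ hcy τ) := by
    rw [seg_smul c⁻¹ hx hcx, seg_smul c hy hcy, smul_sub, smul_smul, inv_mul_cancel₀ hc.ne',
      one_smul]
  rw [hsub, norm_smul, Real.norm_of_nonneg (inv_nonneg.2 hc.le)]
  calc c⁻¹ * ‖seg d r x hx τ - seg d r _ hcy τ‖ ≤ c⁻¹ * 1 := by gcongr; exact hxnear τ hτ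
    _ = δ₁⁻¹ * δ := by rw [mul_one, inv_div, div_eq_inv_mul]

theorem HyersUlam.exists_isSol_near_of_isSol (hHU : HyersUlam d r L) (hr : 0 ≤ r)
    (hL : ContinuousOn L (Ici 0)) {s : ℝ} (hs : 0 ≤ s) {y : ℝ → Rd d} {hy : Continuous y}
    (hsol : IsSol d r L s y hy) :
    ∃ (z : ℝ → Rd d) (hz : Continuous z), IsSol d r L 0 z hz ∧
      ∃ M, ∀ τ, s ≤ τ → ‖seg d r z hz τ - seg d r y hy τ‖ ≤ M := by
  obtain ⟨w, wd, hw, hwd, hder, b, hb⟩ := hsol.exists_pseudoSol_eventuallyEq hr hL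
  obtain ⟨K, hK⟩ := exists_norm_le_of_continuousOn_Ici_of_eq_zero (a := 0)
    (hwd.sub (hL.clm_apply (continuous_seg hw).continuousOn))
    (fun τ hτ => sub_eq_zero.2 (hb τ hτ).2)
  obtain ⟨κ, -, hκ⟩ := hHU
  obtain ⟨z, hz, hzsol, hzw⟩ := hκ (|K| + 1) (by positivity) w wd hw hwd
    (fun τ _ => (hder τ).hasDerivWithinAt)
    (fun τ hτ => (hK τ hτ).trans (by linarith [le_abs_self K]))
  obtain ⟨M, hM⟩ := exists_norm_le_of_continuousOn_Ici_of_eq_zero (a := s)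
    ((continuous_seg hw).sub (continuous_seg hy)).continuousOn
    (fun τ hτ => sub_eq_zero.2 (hb τ hτ).1)
  refine ⟨z, hz, hzsol, κ * (|K| + 1) + M, fun τ hτ => ?_⟩
  rw [← sub_add_sub_cancel _ (seg d r w hw τ)]
  exact norm_add_le_of_le (hzw τ (hs.trans hτ)) (hM τ hτ)

end HyersUlam

section StableSubspace

variable {d : ℕ} {r : ℝ} {L : ℝ → (Ph d r →L[ℝ] Rd d)} {T : ℝ → ℝ → (Ph d r →L[ℝ] Ph d r)}
  {s t : ℝ}

theorem Cocycle.apply_apply (hcoc : Cocycle d r T) {τ : ℝ} (hs : 0 ≤ s) (hst : s ≤ t)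
    (htτ : t ≤ τ) (φ : Ph d r) : T τ t (T t s φ) = T τ s φ := by
  rw [hcoc.2 τ t s hs hst htτ]
  rfl

theorem IsSolOp.continuousOn_apply (hT : IsSolOp d r L T) (hs : 0 ≤ s) (φ : Ph d r) :
    ContinuousOn (fun τ => T τ s φ) (Ici s) := by
  obtain ⟨x, hx, -, -, hxT⟩ := hT s hs φ
  exact (continuous_seg hx).continuousOn.congr fun τ hτ => (hxT τ hτ).symm

theorem Cocycle.map_mem_stableSub (hcoc : Cocycle d r T) (hs : 0 ≤ s) (hst : s ≤ t)
    {φ : Ph d r} (hφ : φ ∈ stableSub d r T s) : T t s φ ∈ stableSub d r T t := by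
  obtain ⟨M, hM⟩ := hφ
  exact ⟨M, fun τ hτ => hcoc.apply_apply hs hst hτ φ ▸ hM τ (hst.trans hτ)⟩

theorem mem_stableSub_of_map_mem (hT : IsSolOp d r L T) (hcoc : Cocycle d r T) (hs : 0 ≤ s)
    (hst : s ≤ t) {φ : Ph d r} (hφ : T t s φ ∈ stableSub d r T t) : φ ∈ stableSub d r T s := by
  obtain ⟨M, hM⟩ := hφ
  obtain ⟨K, hK⟩ := (isCompact_Icc (a := s) (b := t)).exists_bound_of_continuousOn
    ((hT.continuousOn_apply hs φ).mono Icc_subset_Ici_self)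
  refine ⟨max M K, fun τ hτ => ?_⟩
  rcases le_total t τ with htτ | hτt
  · rw [← hcoc.apply_apply hs hst htτ]
    exact (hM τ htτ).trans (le_max_left _ _)
  · exact (hK τ ⟨hτ, hτt⟩).trans (le_max_right _ _)

theorem comap_stableSub (hT : IsSolOp d r L T) (hcoc : Cocycle d r T) (hs : 0 ≤ s)
    (hst : s ≤ t) :
    (stableSub d r T t).comap (T t s : Ph d r →ₗ[ℝ] Ph d r) = stableSub d r T s :=
  Submodule.ext fun _ =>
    ⟨mem_stableSub_of_map_mem hT hcoc hs hst, hcoc.map_mem_stableSub hs hst⟩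

theorem HyersUlam.stableSub_sup_range_eq_top (hHU : HyersUlam d r L) (hr : 0 ≤ r)
    (hL : ContinuousOn L (Ici 0)) (hT : IsSolOp d r L T) (hcoc : Cocycle d r T)
    (huniq : UniqueSol d r L) (ht : 0 ≤ t) :
    stableSub d r T t ⊔ LinearMap.range (T t 0 : Ph d r →ₗ[ℝ] Ph d r) = ⊤ := by
  refine eq_top_iff.2 fun φ _ => ?_
  obtain ⟨y, hy, hysol, -, hyT⟩ := hT t ht φ
  obtain ⟨z, hz, hzsol, M, hM⟩ := hHU.exists_isSol_near_of_isSol hr hL ht hysol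
  have hstable : φ - T t 0 (seg d r z hz 0) ∈ stableSub d r T t := ⟨M, fun τ hτ => by
    rw [map_sub, hcoc.apply_apply le_rfl ht hτ, ← hyT τ hτ,
      ← hzsol.seg_eq_solOp hT huniq le_rfl τ (ht.trans hτ), norm_sub_rev]
    exact hM τ hτ⟩
  exact Submodule.mem_sup.2 ⟨_, hstable, _, LinearMap.mem_range_self _ _, sub_add_cancel _ _⟩

end StableSubspace

theorem stmt10_general (d : ℕ) (r : ℝ) (hr : 0 ≤ r)
    (L : ℝ → (Ph d r →L[ℝ] Rd d)) (hL : ContinuousOn L (Set.Ici 0))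
    (T : ℝ → ℝ → (Ph d r →L[ℝ] Ph d r))
    (hT : IsSolOp d r L T) (hcoc : Cocycle d r T)
    (huniq : UniqueSol d r L)
    (hsh : Shadowable d r L)
    (U : Submodule ℝ (Ph d r))
    (hUcompl : IsCompl (stableSub d r T 0) U) :
    ∀ t, 0 ≤ t → IsCompl (stableSub d r T t) (U.map (T t 0 : Ph d r →ₗ[ℝ] Ph d r)) := by
  intro t ht
  have hcomap := comap_stableSub hT hcoc le_rfl ht
  constructor
  · rw [Submodule.disjoint_def]
    rintro _ hφ ⟨u, hu, rfl⟩
    have hu₀ : u ∈ stableSub d r T 0 := hcomap ▸ hφ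
    rw [Submodule.disjoint_def.1 hUcompl.disjoint u hu₀ hu, map_zero]
  · rw [codisjoint_iff, eq_top_iff,
      ← hsh.hyersUlam.stableSub_sup_range_eq_top hr hL hT hcoc huniq ht,
      LinearMap.range_eq_map, ← hUcompl.sup_eq_top, Submodule.map_sup]
    exact sup_le le_sup_left
      (sup_le_sup_right (Submodule.map_le_iff_le_comap.2 hcomap.ge) _)

/-- If Eq. x'(t) = L(t)x_t is shadowable, then for every t ≥ 0 the phase space
decomposes as C = 𝒮(t) ⊕ 𝒰(t), where 𝒰(t) = T(t,0)𝒰 and C = 𝒮(0) ⊕ 𝒰. -/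
theorem stmt10 (d : ℕ) (r : ℝ) (hr : 0 ≤ r)
    (L : ℝ → (Ph d r →L[ℝ] Rd d)) (hL : ContinuousOn L (Set.Ici 0))
    (T : ℝ → ℝ → (Ph d r →L[ℝ] Ph d r))
    (hT : IsSolOp d r L T) (hcoc : Cocycle d r T)
    (huniq : UniqueSol d r L)
    (hsh : Shadowable d r L)
    (U : Submodule ℝ (Ph d r)) (hUfd : FiniteDimensional ℝ ↥U)
    (hUcompl : IsCompl (stableSub d r T 0) U) :
    ∀ t, 0 ≤ t → IsCompl (stableSub d r T t) (U.map (T t 0 : Ph d r →ₗ[ℝ] Ph d r)) :=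
  stmt10_general d r hr L hL T hT hcoc huniq hsh U hUcompl

end
end

section
/- Suppose the equation x'(t) = L(t)x_t admits an exponential dichotomy with projections P(t) and all its solutions are bounded on [s−r,∞) for every initial time s. Then Q(s) = Id − P(s) = 0 for all s ≥ 0, and hence the dichotomy is an exponential contraction: ‖T(t,s)‖ ≤ De^{−λ(t−s)} for all t ≥ s ≥ 0. -/
open Set

noncomputable section

/-! A nonzero φ ∈ Ker P(s) would satisfy ‖T(t,s)φ‖ ≥ D⁻¹e^{λ(t−s)}‖φ‖ and so give an unbounded
solution; hence every Ker P(s) is trivial, the projection P(s) is the identity, and the forward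
dichotomy estimate for T(t,s)P(s) becomes the contraction estimate for T(t,s). -/

open Filter Topology

theorem eq_zero_of_norm_le_mul_exp_of_bounded {E F : Type*} [NormedAddCommGroup E]
    [SeminormedAddCommGroup F] {ψ : E} {u : ℝ → F} {D lam s B : ℝ} (hlam : 0 < lam)
    (hu : ∀ t, s ≤ t → ‖u t‖ ≤ B)
    (hψ : ∀ t, s ≤ t → ‖ψ‖ ≤ D * Real.exp (-lam * (t - s)) * ‖u t‖) : ψ = 0 := by
  have hexp : Tendsto (fun t : ℝ => D * Real.exp (-lam * (t - s))) atTop (𝓝 0) := by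
    have hlin : Tendsto (fun t : ℝ => -lam * (t - s)) atTop atBot :=
      (tendsto_const_mul_atBot_of_neg (neg_lt_zero.mpr hlam)).mpr
        (tendsto_atTop_add_const_right _ _ tendsto_id)
    simpa using (Real.tendsto_exp_atBot.comp hlin).const_mul D
  have hbdd : IsBoundedUnder (· ≤ ·) atTop (fun t => ‖‖u t‖‖) :=
    isBoundedUnder_of_eventually_le (a := B) <| (eventually_ge_atTop s).mono fun t ht => by
      simpa using hu t ht
  have hlim := hexp.zero_mul_isBoundedUnder_le hbdd
  exact norm_le_zero_iff.mp <| ge_of_tendsto hlim <| (eventually_ge_atTop s).mono hψ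

theorem ContinuousLinearMap.eq_id_of_idempotent_of_ker {R E : Type*} [Semiring R]
    [TopologicalSpace E] [AddCommGroup E] [Module R E] {P : E →L[R] E}
    (hP : P.comp P = P) (hker : ∀ ψ ∈ LinearMap.ker (P : E →ₗ[R] E), ψ = 0) :
    P = ContinuousLinearMap.id R E := by
  ext φ
  have hφ : φ - P φ ∈ LinearMap.ker (P : E →ₗ[R] E) := by
    simp [LinearMap.mem_ker, map_sub, ← comp_apply, hP]
  exact (sub_eq_zero.mp (hker _ hφ)).symm

theorem stmt16_general (d : ℕ) (r : ℝ)
    (L : ℝ → (Ph d r →L[ℝ] Rd d))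
    (T : ℝ → ℝ → (Ph d r →L[ℝ] Ph d r))
    (P : ℝ → (Ph d r →L[ℝ] Ph d r)) (D lam : ℝ) (hlam : 0 < lam)
    (hproj : ∀ t, 0 ≤ t → (P t).comp (P t) = P t)
    (hstab : ∀ t s, 0 ≤ s → s ≤ t → ‖(T t s).comp (P s)‖ ≤ D * Real.exp (-lam * (t - s)))
    (hunst : ∀ t s, 0 ≤ t → t ≤ s → ∀ φ ∈ LinearMap.ker (P t : Ph d r →ₗ[ℝ] Ph d r),
      ‖φ‖ ≤ D * Real.exp (-lam * (s - t)) * ‖T s t φ‖)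
    (hbdd : ∀ s, 0 ≤ s → ∀ φ : Ph d r, ∃ B, ∀ t, s ≤ t → ‖T t s φ‖ ≤ B) :
    (∀ s, 0 ≤ s → P s = ContinuousLinearMap.id ℝ (Ph d r)) ∧
    (∀ t s, 0 ≤ s → s ≤ t → ‖T t s‖ ≤ D * Real.exp (-lam * (t - s))) := by
  have hP : ∀ s, 0 ≤ s → P s = ContinuousLinearMap.id ℝ (Ph d r) := fun s hs =>
    ContinuousLinearMap.eq_id_of_idempotent_of_ker (hproj s hs) fun ψ hψ =>
      let ⟨B, hB⟩ := hbdd s hs ψ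
      eq_zero_of_norm_le_mul_exp_of_bounded hlam hB fun t hst => hunst s t hs hst ψ hψ
  refine ⟨hP, fun t s hs hst => ?_⟩
  simpa [hP s hs] using hstab t s hs hst

/-- If Eq. x'(t) = L(t)x_t admits an exponential dichotomy with projections
P(t) and all its solutions are bounded, then Q(s) = Id − P(s) = 0 for all
s ≥ 0 and the dichotomy is an exponential contraction. -/
theorem stmt16 (d : ℕ) (r : ℝ) (hr : 0 ≤ r)
    (L : ℝ → (Ph d r →L[ℝ] Rd d)) (hL : ContinuousOn L (Set.Ici 0))
    (T : ℝ → ℝ → (Ph d r →L[ℝ] Ph d r))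
    (hT : IsSolOp d r L T) (hcoc : Cocycle d r T)
    (P : ℝ → (Ph d r →L[ℝ] Ph d r)) (D lam : ℝ) (hD : 0 < D) (hlam : 0 < lam)
    (hproj : ∀ t, 0 ≤ t → (P t).comp (P t) = P t)
    (hcomm : ∀ t s, 0 ≤ s → s ≤ t → (P t).comp (T t s) = (T t s).comp (P s))
    (hbij : ∀ t s, 0 ≤ s → s ≤ t →
      Set.BijOn (⇑(T t s)) (LinearMap.ker (P s : Ph d r →ₗ[ℝ] Ph d r) : Set (Ph d r))
        (LinearMap.ker (P t : Ph d r →ₗ[ℝ] Ph d r) : Set (Ph d r)))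
    (hstab : ∀ t s, 0 ≤ s → s ≤ t → ‖(T t s).comp (P s)‖ ≤ D * Real.exp (-lam * (t - s)))
    (hunst : ∀ t s, 0 ≤ t → t ≤ s → ∀ φ ∈ LinearMap.ker (P t : Ph d r →ₗ[ℝ] Ph d r),
      ‖φ‖ ≤ D * Real.exp (-lam * (s - t)) * ‖T s t φ‖)
    (hbdd : ∀ s, 0 ≤ s → ∀ φ : Ph d r, ∃ B, ∀ t, s ≤ t → ‖T t s φ‖ ≤ B) :
    (∀ s, 0 ≤ s → P s = ContinuousLinearMap.id ℝ (Ph d r)) ∧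
    (∀ t s, 0 ≤ s → s ≤ t → ‖T t s‖ ≤ D * Real.exp (-lam * (t - s))) :=
  stmt16_general d r L T P D lam hlam hproj hstab hunst hbdd

end
end

section
/- Let v : [0,∞) → (0,∞) be continuously differentiable with ∫₀ᵗ v(s) ds ≤ v(t) for all t ≥ 0, v(t) → ∞ as t → ∞, and suppose (αₙ) is a sequence of positive numbers with αₙ → 0 and v(n − αₙ)/v(n) > n for all n ∈ ℕ. Then the scalar ODE x'(t) = a(t)x(t) with a(t) = −v'(t)/v(t) does not admit an exponential dichotomy (equivalently, its evolution family T(t,s), which has ‖T(t,s)‖ = v(s)/v(t) for t ≥ s, is not an exponential contraction). -/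
noncomputable section

/-- Dalecki–Krein type example: if v > 0 is continuously differentiable with
∫₀ᵗ v ≤ v(t), v(t) → ∞, and v(n − αₙ)/v(n) > n with αₙ → 0, αₙ > 0, then the
evolution family T(t,s) of x' = a(t)x with a = −v'/v, which satisfies
T(t,s)x = (v(s)/v(t))·x, is not an exponential contraction (equivalently, the
equation admits no exponential dichotomy). -/
theorem stmt17 (v vd : ℝ → ℝ) (α : ℕ → ℝ)
    (hpos : ∀ t, 0 ≤ t → 0 < v t)
    (hderiv : ∀ t, 0 ≤ t → HasDerivWithinAt v (vd t) (Set.Ici 0) t)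
    (hcont : ContinuousOn vd (Set.Ici 0))
    (hint : ∀ t, 0 ≤ t → (∫ s in (0:ℝ)..t, v s) ≤ v t)
    (hlim : Filter.Tendsto v Filter.atTop Filter.atTop)
    (hα : ∀ n, 0 < α n)
    (hα0 : Filter.Tendsto α Filter.atTop (nhds 0))
    (hαv : ∀ n : ℕ, 1 ≤ n → (n : ℝ) * v n < v ((n : ℝ) - α n))
    (a : ℝ → ℝ) (ha : ∀ t, 0 ≤ t → a t = -(vd t) / v t)
    (T : ℝ → ℝ → (ℝ →L[ℝ] ℝ))
    (hT : ∀ t s x, 0 ≤ s → s ≤ t → T t s x = (v s / v t) * x) :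
    ¬ ∃ D lam : ℝ, 0 < D ∧ 0 < lam ∧
        ∀ t s, 0 ≤ s → s ≤ t → ‖T t s‖ ≤ D * Real.exp (-lam * (t - s)) := by
  rintro ⟨D, lam, hD, hlam, hbound⟩
  -- choose n large: n ≥ 1, α n ≤ 1, (n:ℝ) > D
  have h1 : ∀ᶠ n : ℕ in Filter.atTop, α n ≤ 1 := by
    have := hα0.eventually (gt_mem_nhds (by norm_num : (0:ℝ) < 1))
    exact this.mono fun n h => le_of_lt h
  have h2 : ∀ᶠ n : ℕ in Filter.atTop, D < (n : ℝ) :=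
    Filter.eventually_atTop.mpr ⟨⌈D⌉₊ + 1, fun n hn => lt_of_le_of_lt (Nat.le_ceil D)
      (by exact_mod_cast Nat.lt_of_succ_le hn)⟩
  obtain ⟨n, ⟨hα1, hDn⟩, hn1⟩ := ((h1.and h2).and (Filter.eventually_ge_atTop 1)).exists
  set s := (n : ℝ) - α n with hs
  have hn1' : (1:ℝ) ≤ (n:ℝ) := by exact_mod_cast hn1
  have hs0 : 0 ≤ s := by simp only [hs]; linarith
  have hst : s ≤ (n:ℝ) := by simp only [hs]; linarith [hα n]
  have hvn : 0 < v n := hpos _ (by linarith)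
  have hvs : 0 < v s := hpos _ hs0
  -- norm lower bound
  have hT1 : T (n:ℝ) s 1 = v s / v n := by
    rw [hT (n:ℝ) s 1 hs0 hst]; ring
  have hnorm : v s / v n ≤ ‖T (n:ℝ) s‖ := by
    have := (T (n:ℝ) s).le_opNorm 1
    rw [hT1] at this
    simpa [abs_div, abs_of_pos hvs, abs_of_pos hvn] using this
  have hub : ‖T (n:ℝ) s‖ ≤ D * Real.exp (-lam * ((n:ℝ) - s)) := hbound _ _ hs0 hst
  have hexp : Real.exp (-lam * ((n:ℝ) - s)) ≤ 1 := by
    apply Real.exp_le_one_iff.mpr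
    have : (n:ℝ) - s = α n := by simp [hs]
    rw [this]
    nlinarith [hα n]
  have key : v s / v n ≤ D := by
    calc v s / v n ≤ D * Real.exp (-lam * ((n:ℝ) - s)) := le_trans hnorm hub
    _ ≤ D * 1 := by nlinarith
    _ = D := mul_one D
  have hgt : (n:ℝ) < v s / v n := by
    rw [lt_div_iff₀ hvn]
    exact hαv n hn1
  linarith

end
end
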